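/- Let q be a prime power, M an invertible 2×2 matrix over ℤ/(q−1)ℤ, v ∈ (ℤ/(q−1)ℤ)², and let T(w) = Mw + v. Let S₁ ⊆ (ℤ/(q−1)ℤ)² and S₂ = T(S₁). Then the generalized toric codes C_{S₁}(𝔽_q) and C_{S₂}(𝔽_q) are monomially equivalent: there exist a permutation π of the index set (𝔽_q^×)² and a function c : (𝔽_q^×)² → 𝔽_q^× such that C_{S₂}(𝔽_q) = { (c(p)·w_{π(p)})_{p ∈ (𝔽_q^×)²} : w ∈ C_{S₁}(𝔽_q) }. -/

import Mathlib

/-- The generalized toric code `C_S(F)` for a set `S` of exponent vectors in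
`(ℤ/(q-1)ℤ)²` (exponents read via their representatives in `{0,…,q-2}`): the set of
evaluation vectors on the torus `(Fˣ)²` of the `F`-linear combinations of the
monomials `x^{s₁} y^{s₂}`, `(s₁,s₂) ∈ S`. -/
def toricCode (q : ℕ) (F : Type) [Field F]
    (S : Finset (ZMod (q - 1) × ZMod (q - 1))) : Set ((Fˣ × Fˣ) → F) :=
  {w | ∃ c : ZMod (q - 1) × ZMod (q - 1) → F,
    ∀ p : Fˣ × Fˣ, w p = ∑ s ∈ S, c s * (p.1 : F) ^ s.1.val * (p.2 : F) ^ s.2.val}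

/-!
The monomial `x^{s₁} y^{s₂}` is a character `χ_s` (`torusMonomial s`) of the torus `(Fˣ)²`,
and since `Fˣ` has exponent `q - 1` these characters are indexed by `(ℤ/(q-1)ℤ)²` additively:
`χ_{s+t} = χ_s χ_t`. Every matrix `M` over `ℤ/(q-1)ℤ` induces an endomorphism `φ_M`
(`monomialMap M`) of the torus, dual to `M` in the sense that `χ_s ∘ φ_M = χ_{Ms}`; it is a
bijection with inverse `φ_{M⁻¹}` when `M` is invertible. Hence `χ_{Ms+v}(p) = χ_v(p) χ_s(φ_M p)`,
so evaluating a combination of the monomials of `T(S₁)` at `p` is evaluating the corresponding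
combination of the monomials of `S₁` at `φ_M p` and scaling by the nonzero `χ_v(p)`.
-/

section PowVal

variable {G : Type*} [Monoid G] {n : ℕ} {g : G}

theorem pow_eq_pow_of_natCast_eq (hg : g ^ n = 1) {a b : ℕ} (h : (a : ZMod n) = b) :
    g ^ a = g ^ b := by
  rw [pow_eq_pow_mod a hg, pow_eq_pow_mod b hg, (ZMod.natCast_eq_natCast_iff a b n).mp h]

variable [NeZero n]

theorem pow_val_add (hg : g ^ n = 1) (a b : ZMod n) :
    g ^ (a + b).val = g ^ a.val * g ^ b.val := by
  rw [← pow_add]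
  exact pow_eq_pow_of_natCast_eq hg (by push_cast [ZMod.natCast_zmod_val]; rfl)

theorem pow_val_mul (hg : g ^ n = 1) (a b : ZMod n) :
    g ^ (a * b).val = (g ^ a.val) ^ b.val := by
  rw [← pow_mul]
  exact pow_eq_pow_of_natCast_eq hg (by push_cast [ZMod.natCast_zmod_val]; rfl)

theorem pow_val_one (hg : g ^ n = 1) : g ^ (1 : ZMod n).val = g :=
  (pow_eq_pow_of_natCast_eq hg (by simp)).trans (pow_one g)

end PowVal

def pairMulVec {R : Type*} [CommRing R] (M : Matrix (Fin 2) (Fin 2) R) (w : R × R) : R × R :=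
  (M 0 0 * w.1 + M 0 1 * w.2, M 1 0 * w.1 + M 1 1 * w.2)

theorem pairMulVec_pairMulVec {R : Type*} [CommRing R] (A B : Matrix (Fin 2) (Fin 2) R)
    (w : R × R) : pairMulVec A (pairMulVec B w) = pairMulVec (A * B) w := by
  simp only [pairMulVec, Matrix.mul_apply, Fin.sum_univ_two]
  ext <;> ring

theorem pairMulVec_injective {R : Type*} [CommRing R] {M : Matrix (Fin 2) (Fin 2) R}
    (hM : IsUnit M.det) : Function.Injective (pairMulVec M) :=
  Function.LeftInverse.injective (g := pairMulVec M⁻¹) fun w => by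
    rw [pairMulVec_pairMulVec, Matrix.nonsing_inv_mul M hM]
    simp [pairMulVec]

section TorusCharacters

variable {G : Type*} [CommGroup G] {n : ℕ}

def torusMonomial (s : ZMod n × ZMod n) (p : G × G) : G :=
  p.1 ^ s.1.val * p.2 ^ s.2.val

def monomialMap (M : Matrix (Fin 2) (Fin 2) (ZMod n)) (p : G × G) : G × G :=
  (torusMonomial (M 0 0, M 1 0) p, torusMonomial (M 0 1, M 1 1) p)

variable [NeZero n] (hG : ∀ g : G, g ^ n = 1)
include hG

theorem torusMonomial_add (s t : ZMod n × ZMod n) (p : G × G) :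
    torusMonomial (s + t) p = torusMonomial s p * torusMonomial t p := by
  simp only [torusMonomial, Prod.fst_add, Prod.snd_add, pow_val_add (hG _)]
  ac_rfl

theorem torusMonomial_monomialMap (M : Matrix (Fin 2) (Fin 2) (ZMod n)) (s : ZMod n × ZMod n)
    (p : G × G) : torusMonomial s (monomialMap M p) = torusMonomial (pairMulVec M s) p := by
  simp only [torusMonomial, monomialMap, pairMulVec, mul_pow, pow_val_add (hG _),
    pow_val_mul (hG _)]
  ac_rfl

theorem monomialMap_one (p : G × G) :
    monomialMap (1 : Matrix (Fin 2) (Fin 2) (ZMod n)) p = p := by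
  simp [monomialMap, torusMonomial, pow_val_one (hG _)]

theorem monomialMap_monomialMap (A B : Matrix (Fin 2) (Fin 2) (ZMod n)) (p : G × G) :
    monomialMap A (monomialMap B p) = monomialMap (B * A) p := by
  conv_lhs => rw [monomialMap, torusMonomial_monomialMap hG, torusMonomial_monomialMap hG]
  simp only [monomialMap, pairMulVec, Matrix.mul_apply, Fin.sum_univ_two]

noncomputable def monomialEquiv (M : Matrix (Fin 2) (Fin 2) (ZMod n)) (hM : IsUnit M.det) :
    (G × G) ≃ (G × G) where
  toFun := monomialMap M
  invFun := monomialMap M⁻¹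
  left_inv p := by
    rw [monomialMap_monomialMap hG, Matrix.mul_nonsing_inv M hM, monomialMap_one hG]
  right_inv p := by
    rw [monomialMap_monomialMap hG, Matrix.nonsing_inv_mul M hM, monomialMap_one hG]

end TorusCharacters

theorem mem_toricCode_iff {q : ℕ} {F : Type} [Field F]
    {S : Finset (ZMod (q - 1) × ZMod (q - 1))} {w : Fˣ × Fˣ → F} :
    w ∈ toricCode q F S ↔ ∃ c : ZMod (q - 1) × ZMod (q - 1) → F,
      ∀ p, w p = ∑ s ∈ S, c s * ((torusMonomial s p : Fˣ) : F) := by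
  simp [toricCode, torusMonomial, mul_assoc]

theorem toricCode_image_affine {q : ℕ} {F : Type} [Field F] [NeZero (q - 1)]
    (hexp : ∀ u : Fˣ, u ^ (q - 1) = 1) {M : Matrix (Fin 2) (Fin 2) (ZMod (q - 1))}
    (hM : IsUnit M.det) (v : ZMod (q - 1) × ZMod (q - 1))
    (S : Finset (ZMod (q - 1) × ZMod (q - 1))) :
    toricCode q F (S.image fun s => pairMulVec M s + v) =
      {w' | ∃ w ∈ toricCode q F S,
        w' = fun p => ((torusMonomial v p : Fˣ) : F) * w (monomialMap M p)} := by
  set T := fun s => pairMulVec M s + v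
  have hT : Function.Injective T := (add_left_injective v).comp (pairMulVec_injective hM)
  have eval : ∀ (c : ZMod (q - 1) × ZMod (q - 1) → F) (p : Fˣ × Fˣ),
      ∑ t ∈ S.image T, c t * ((torusMonomial t p : Fˣ) : F) =
        ((torusMonomial v p : Fˣ) : F) *
          ∑ s ∈ S, c (T s) * ((torusMonomial s (monomialMap M p) : Fˣ) : F) := by
    intro c p
    rw [Finset.sum_image fun _ _ _ _ h => hT h, Finset.mul_sum]
    refine Finset.sum_congr rfl fun s _ => ?_
    rw [torusMonomial_add hexp, torusMonomial_monomialMap hexp, Units.val_mul]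
    ring
  ext w'
  simp only [mem_toricCode_iff, Set.mem_ofPred_eq]
  constructor
  · rintro ⟨c, hc⟩
    exact ⟨_, ⟨c ∘ T, fun p => rfl⟩, funext fun p => (hc p).trans (eval c p)⟩
  · rintro ⟨w, ⟨c, hc⟩, rfl⟩
    refine ⟨c ∘ Function.invFun T, fun p => ?_⟩
    simp only [eval, hc, Function.comp_apply, Function.leftInverse_invFun hT _]

theorem toric_codes_monomially_equivalent_general (q : ℕ)
    (F : Type) [Field F] [Fintype F] (hF : Fintype.card F = q)
    (M : Matrix (Fin 2) (Fin 2) (ZMod (q - 1))) (hM : IsUnit M.det)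
    (v : ZMod (q - 1) × ZMod (q - 1))
    (S₁ S₂ : Finset (ZMod (q - 1) × ZMod (q - 1)))
    (hS₂ : S₂ = S₁.image (fun w : ZMod (q - 1) × ZMod (q - 1) =>
      (M 0 0 * w.1 + M 0 1 * w.2 + v.1, M 1 0 * w.1 + M 1 1 * w.2 + v.2))) :
    ∃ (π : (Fˣ × Fˣ) ≃ (Fˣ × Fˣ)) (c : Fˣ × Fˣ → Fˣ),
      toricCode q F S₂ =
        {w' | ∃ w ∈ toricCode q F S₁, w' = fun p : Fˣ × Fˣ => (c p : F) * w (π p)} := by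
  classical
  have : NeZero (q - 1) := ⟨by have := hF ▸ Fintype.one_lt_card (α := F); omega⟩
  have hexp : ∀ u : Fˣ, u ^ (q - 1) = 1 := fun u => by
    simpa [Fintype.card_units, hF] using pow_card_eq_one (x := u)
  subst hS₂
  exact ⟨monomialEquiv hexp M hM, torusMonomial v, toricCode_image_affine hexp hM v S₁⟩

/-- Let `q` be a prime power, `F` a field with `q` elements, `M` an invertible `2 × 2`
matrix over `ℤ/(q-1)ℤ`, `v ∈ (ℤ/(q-1)ℤ)²`, and `T(w) = Mw + v`.  If `S₂ = T(S₁)`,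
then the generalized toric codes `C_{S₁}(F)` and `C_{S₂}(F)` are monomially
equivalent: some permutation `π` of the torus and nonzero scalars `c(p)` carry
`C_{S₁}(F)` onto `C_{S₂}(F)`. -/
theorem toric_codes_monomially_equivalent (q : ℕ) (hq : IsPrimePow q)
    (F : Type) [Field F] [Fintype F] (hF : Fintype.card F = q)
    (M : Matrix (Fin 2) (Fin 2) (ZMod (q - 1))) (hM : IsUnit M.det)
    (v : ZMod (q - 1) × ZMod (q - 1))
    (S₁ S₂ : Finset (ZMod (q - 1) × ZMod (q - 1)))
    (hS₂ : S₂ = S₁.image (fun w : ZMod (q - 1) × ZMod (q - 1) =>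
      (M 0 0 * w.1 + M 0 1 * w.2 + v.1, M 1 0 * w.1 + M 1 1 * w.2 + v.2))) :
    ∃ (π : (Fˣ × Fˣ) ≃ (Fˣ × Fˣ)) (c : Fˣ × Fˣ → Fˣ),
      toricCode q F S₂ =
        {w' | ∃ w ∈ toricCode q F S₁, w' = fun p : Fˣ × Fˣ => (c p : F) * w (π p)} :=
  toric_codes_monomially_equivalent_general q F hF M hM v S₁ S₂ hS₂
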